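/- arXiv:2602.16203 — 9 statements merged into one kernel-verified Lean document; each statement's English description precedes it below -/
import Mathlib

section
/- A function f : 2^E → P is (Q3)-submodular if and only if for every pair X, Y ⊆ E, at least one of condition (Q1) or condition (Q2) holds for that pair, i.e., for every X, Y ⊆ E either (f(X) ≤ f(X ∩ Y) implies f(X ∪ Y) ≤ f(Y)) or (f(X) < f(X ∩ Y) implies f(X ∪ Y) < f(Y)). -/
theorem lt_imp_le_iff_le_imp_le_or_lt_imp_lt {P : Type*} [Preorder P] {a b c d : P} :
    (a < b → c ≤ d) ↔ (a ≤ b → c ≤ d) ∨ (a < b → c < d) := by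
  constructor
  · intro h
    by_cases hcd : c ≤ d
    · exact Or.inl fun _ => hcd
    · exact Or.inr fun hab => absurd (h hab) hcd
  · rintro (h | h) hab
    · exact h hab.le
    · exact (h hab).le

theorem q3_iff_q1_or_q2_pointwise_general {E : Type*} [DecidableEq E]
    {P : Type*} [LinearOrder P] (f : Finset E → P) :
    (∀ X Y : Finset E, f X < f (X ∩ Y) → f (X ∪ Y) ≤ f Y) ↔
      (∀ X Y : Finset E,
        (f X ≤ f (X ∩ Y) → f (X ∪ Y) ≤ f Y) ∨
        (f X < f (X ∩ Y) → f (X ∪ Y) < f Y)) :=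
  forall₂_congr fun _ _ => lt_imp_le_iff_le_imp_le_or_lt_imp_lt

theorem q3_iff_q1_or_q2_pointwise {E : Type*} [Fintype E] [DecidableEq E]
    {P : Type*} [LinearOrder P] (f : Finset E → P) :
    (∀ X Y : Finset E, f X < f (X ∩ Y) → f (X ∪ Y) ≤ f Y) ↔
      (∀ X Y : Finset E,
        (f X ≤ f (X ∩ Y) → f (X ∪ Y) ≤ f Y) ∨
        (f X < f (X ∩ Y) → f (X ∪ Y) < f Y)) :=
  q3_iff_q1_or_q2_pointwise_general f
end

section
/- Let f : 2^E → P be a (Q1)-submodular function. If X ⊆ E is a minimizer of f over the interval [∅, X] (i.e., f(X) ≤ f(Z) for all Z ⊆ X), then there exists a global minimizer Z* of f over 2^E with X ⊆ Z*. -/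
theorem map_sup_le_of_isMinOn_Iic {α P : Type*} [Lattice α] [Preorder P] {f : α → P}
    (hQ1 : ∀ X Y : α, f X ≤ f (X ⊓ Y) → f (X ⊔ Y) ≤ f Y)
    {X : α} (hX : IsMinOn f (Set.Iic X) X) (Y : α) : f (X ⊔ Y) ≤ f Y :=
  hQ1 X Y (isMinOn_iff.mp hX _ inf_le_left)

theorem q1_local_min_extends {E : Type*} [Fintype E] [DecidableEq E]
    {P : Type*} [LinearOrder P] (f : Finset E → P)
    (hQ1 : ∀ X Y : Finset E, f X ≤ f (X ∩ Y) → f (X ∪ Y) ≤ f Y)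
    (X : Finset E) (hX : ∀ Z : Finset E, Z ⊆ X → f X ≤ f Z) :
    ∃ Zstar : Finset E, X ⊆ Zstar ∧ ∀ Z : Finset E, f Zstar ≤ f Z := by
  obtain ⟨Y, hY⟩ := Finite.exists_min f
  have hXY : f (X ∪ Y) ≤ f Y := map_sup_le_of_isMinOn_Iic hQ1 (isMinOn_iff.mpr hX) Y
  exact ⟨X ∪ Y, Finset.subset_union_left, fun Z => hXY.trans (hY Z)⟩
end

section
/- Let f : 2^E → P be a (Q1)-submodular function. If X* ⊆ E is a minimizer of f over [∅, X*] ∪ [X*, E] (i.e., f(X*) ≤ f(Z) for all Z with Z ⊆ X* or X* ⊆ Z), then X* is a global minimizer of f over 2^E. -/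
def IsQ1Submodular {α P : Type*} [Lattice α] [Preorder P] (f : α → P) : Prop :=
  ∀ x y, f x ≤ f (x ⊓ y) → f (x ⊔ y) ≤ f y

theorem IsQ1Submodular.le_of_forall_comparable_le {α P : Type*} [Lattice α] [Preorder P]
    {f : α → P} (hf : IsQ1Submodular f) {x : α} (hx : ∀ z, z ≤ x ∨ x ≤ z → f x ≤ f z)
    (z : α) : f x ≤ f z :=
  calc f x ≤ f (x ⊔ z) := hx _ (.inr le_sup_left)
    _ ≤ f z := hf x z (hx _ (.inl inf_le_left))

theorem q1_local_min_is_global_general {E : Type*} [DecidableEq E]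
    {P : Type*} [LinearOrder P] (f : Finset E → P)
    (hQ1 : ∀ X Y : Finset E, f X ≤ f (X ∩ Y) → f (X ∪ Y) ≤ f Y)
    (Xstar : Finset E)
    (hX : ∀ Z : Finset E, Z ⊆ Xstar ∨ Xstar ⊆ Z → f Xstar ≤ f Z) :
    ∀ Z : Finset E, f Xstar ≤ f Z :=
  IsQ1Submodular.le_of_forall_comparable_le hQ1 hX

theorem q1_local_min_is_global {E : Type*} [Fintype E] [DecidableEq E]
    {P : Type*} [LinearOrder P] (f : Finset E → P)
    (hQ1 : ∀ X Y : Finset E, f X ≤ f (X ∩ Y) → f (X ∪ Y) ≤ f Y)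
    (Xstar : Finset E)
    (hX : ∀ Z : Finset E, Z ⊆ Xstar ∨ Xstar ⊆ Z → f Xstar ≤ f Z) :
    ∀ Z : Finset E, f Xstar ≤ f Z :=
  q1_local_min_is_global_general f hQ1 Xstar hX
end

section
/- Let f : 2^E → P be a (Q2)-submodular function. If X ⊆ E is a minimizer of f over the interval [X, E] (i.e., f(X) ≤ f(Z) for all Z with X ⊆ Z ⊆ E), then there exists a global minimizer Z* of f over 2^E with Z* ⊆ X. -/
theorem inter_le_of_forall_le_of_subset {E P : Type*} [DecidableEq E] [LinearOrder P]
    {f : Finset E → P} (hQ2 : ∀ X Y : Finset E, f X < f (X ∩ Y) → f (X ∪ Y) < f Y)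
    {X : Finset E} (hX : ∀ Z : Finset E, X ⊆ Z → f X ≤ f Z) (Y : Finset E) :
    f (Y ∩ X) ≤ f Y :=
  not_lt.1 fun h => (hQ2 Y X h).not_ge (hX _ Finset.subset_union_right)

theorem q2_local_min_restricts {E : Type*} [Fintype E] [DecidableEq E]
    {P : Type*} [LinearOrder P] (f : Finset E → P)
    (hQ2 : ∀ X Y : Finset E, f X < f (X ∩ Y) → f (X ∪ Y) < f Y)
    (X : Finset E) (hX : ∀ Z : Finset E, X ⊆ Z → f X ≤ f Z) :
    ∃ Zstar : Finset E, Zstar ⊆ X ∧ ∀ Z : Finset E, f Zstar ≤ f Z := by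
  obtain ⟨Y, hY⟩ := Finite.exists_min f
  exact ⟨Y ∩ X, Finset.inter_subset_right, fun Z =>
    (inter_le_of_forall_le_of_subset hQ2 hX Y).trans (hY Z)⟩
end

section
/- Let f : 2^E → P be a (Q2)-submodular function. If X* ⊆ E satisfies f(X*) ≤ f(Z) for all Z with Z ⊆ X* or X* ⊆ Z, then X* is a global minimizer of f over 2^E. -/
theorem q2_local_min_is_global_general {E : Type*} [DecidableEq E]
    {P : Type*} [LinearOrder P] (f : Finset E → P)
    (hQ2 : ∀ X Y : Finset E, f X < f (X ∩ Y) → f (X ∪ Y) < f Y)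
    (Xstar : Finset E)
    (hX : ∀ Z : Finset E, Z ⊆ Xstar ∨ Xstar ⊆ Z → f Xstar ≤ f Z) :
    ∀ Z : Finset E, f Xstar ≤ f Z := by
  intro Z
  by_contra! hZ
  have h_inter : f Xstar ≤ f (Z ∩ Xstar) := hX _ (.inl Finset.inter_subset_right)
  have h_union : f (Z ∪ Xstar) < f Xstar := hQ2 Z Xstar (hZ.trans_le h_inter)
  exact (hX _ (.inr Finset.subset_union_right)).not_gt h_union

theorem q2_local_min_is_global {E : Type*} [Fintype E] [DecidableEq E]
    {P : Type*} [LinearOrder P] (f : Finset E → P)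
    (hQ2 : ∀ X Y : Finset E, f X < f (X ∩ Y) → f (X ∪ Y) < f Y)
    (Xstar : Finset E)
    (hX : ∀ Z : Finset E, Z ⊆ Xstar ∨ Xstar ⊆ Z → f Xstar ≤ f Z) :
    ∀ Z : Finset E, f Xstar ≤ f Z :=
  q2_local_min_is_global_general f hQ2 Xstar hX
end

section
/- Let f : 2^E → P be a (Q4)-submodular function that is injective (f(X) ≠ f(Y) for all distinct X, Y ⊆ E). If X* ⊆ E is a minimizer of f over [∅, X*] ∪ [X*, E], then X* is a global minimizer of f over 2^E, and in fact X* is the unique global minimizer. -/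
/-!
If `f x` were not the global minimum, pick `z` with `f z < f x`. Then (Q4) forces
`min (f (x ⊔ z)) (f (x ⊓ z)) ≤ f x`, while both `x ⊔ z` and `x ⊓ z` are comparable with `x`, so
both values are `≥ f x`. Hence one of them equals `f x`, and injectivity gives `x ⊔ z = x` or
`x ⊓ z = x`: `z` itself is comparable with `x`, so `f x ≤ f z` after all. Uniqueness of the global
minimizer is injectivity again.
-/

open Function

def IsQ4Submodular {α P : Type*} [Lattice α] [LinearOrder P] (f : α → P) : Prop :=
  ∀ x y, min (f (x ⊔ y)) (f (x ⊓ y)) ≤ max (f x) (f y)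

namespace IsQ4Submodular

variable {α P : Type*} [Lattice α] [LinearOrder P] {f : α → P}

theorem comparable_of_le (hf : IsQ4Submodular f) (hinj : Injective f) {x z : α}
    (hx : ∀ y, y ≤ x ∨ x ≤ y → f x ≤ f y) (hz : f z ≤ f x) : z ≤ x ∨ x ≤ z := by
  have hsup : f x ≤ f (x ⊔ z) := hx _ (Or.inr le_sup_left)
  have hinf : f x ≤ f (x ⊓ z) := hx _ (Or.inl inf_le_left)
  have hmin : min (f (x ⊔ z)) (f (x ⊓ z)) = f x :=
    le_antisymm (max_eq_left hz ▸ hf x z) (le_min hsup hinf)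
  rcases min_choice (f (x ⊔ z)) (f (x ⊓ z)) with h | h <;> rw [h] at hmin
  · exact Or.inl (sup_eq_left.mp (hinj hmin))
  · exact Or.inr (inf_eq_left.mp (hinj hmin))

theorem forall_le_of_forall_comparable_le (hf : IsQ4Submodular f) (hinj : Injective f) {x : α}
    (hx : ∀ y, y ≤ x ∨ x ≤ y → f x ≤ f y) (z : α) : f x ≤ f z :=
  le_of_not_gt fun hz => (hx z (hf.comparable_of_le hinj hx hz.le)).not_gt hz

end IsQ4Submodular

theorem q4_injective_local_min_is_unique_global_general {E : Type*} [DecidableEq E]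
    {P : Type*} [LinearOrder P] (f : Finset E → P)
    (hQ4 : ∀ X Y : Finset E, max (f X) (f Y) ≥ min (f (X ∪ Y)) (f (X ∩ Y)))
    (hinj : Function.Injective f)
    (Xstar : Finset E)
    (hX : ∀ Z : Finset E, Z ⊆ Xstar ∨ Xstar ⊆ Z → f Xstar ≤ f Z) :
    (∀ Z : Finset E, f Xstar ≤ f Z) ∧
      (∀ W : Finset E, (∀ Z : Finset E, f W ≤ f Z) → W = Xstar) := by
  have hf : IsQ4Submodular f := hQ4
  have hmin := hf.forall_le_of_forall_comparable_le hinj hX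
  exact ⟨hmin, fun W hW => hinj (le_antisymm (hW Xstar) (hmin W))⟩

theorem q4_injective_local_min_is_unique_global {E : Type*} [Fintype E] [DecidableEq E]
    {P : Type*} [LinearOrder P] (f : Finset E → P)
    (hQ4 : ∀ X Y : Finset E, max (f X) (f Y) ≥ min (f (X ∪ Y)) (f (X ∩ Y)))
    (hinj : Function.Injective f)
    (Xstar : Finset E)
    (hX : ∀ Z : Finset E, Z ⊆ Xstar ∨ Xstar ⊆ Z → f Xstar ≤ f Z) :
    (∀ Z : Finset E, f Xstar ≤ f Z) ∧
      (∀ W : Finset E, (∀ Z : Finset E, f W ≤ f Z) → W = Xstar) :=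
  q4_injective_local_min_is_unique_global_general f hQ4 hinj Xstar hX
end

section
/- There exists a finite set E and a (Q4)-submodular function f : 2^E → ℝ that is not (Q3)-submodular. In particular, if f and some X, Y ⊆ E satisfy f(X) < f(X ∩ Y) < f(Y) < f(X ∪ Y), then (Q4) holds for that pair (X, Y) but (Q3) fails for it. -/
/-!
On `E = {0, 1}` take `f {0} < f ∅ < f {1} < f {0, 1}`. For the pair `X = {0}`, `Y = {1}` this
chain makes `f X < f (X ∩ Y)` while `f Y < f (X ∪ Y)`, so (Q3) fails; (Q4) only asks that
`min (f (X ∪ Y)) (f (X ∩ Y)) ≤ max (f X) (f Y)`, which the chain gives via `f (X ∩ Y) ≤ f Y`,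
and a finite check shows it holds for every other pair too.
-/

section Submodularity

variable {E P Q : Type*} [DecidableEq E] [LinearOrder P] [LinearOrder Q]

def Q3Submodular (f : Finset E → P) : Prop :=
  ∀ X Y : Finset E, f X < f (X ∩ Y) → f (X ∪ Y) ≤ f Y

def Q4Submodular (f : Finset E → P) : Prop :=
  ∀ X Y : Finset E, min (f (X ∪ Y)) (f (X ∩ Y)) ≤ max (f X) (f Y)

theorem Q4Submodular.comp {f : Finset E → P} (hf : Q4Submodular f) {g : P → Q}
    (hg : Monotone g) : Q4Submodular (g ∘ f) := fun X Y => by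
  simpa only [Function.comp_apply, hg.map_min, hg.map_max] using hg (hf X Y)

theorem Q3Submodular.of_comp {f : Finset E → P} {g : P → Q} (hg : StrictMono g)
    (hgf : Q3Submodular (g ∘ f)) : Q3Submodular f := fun X Y hlt =>
  hg.le_iff_le.mp (hgf X Y (hg hlt))

theorem min_union_inter_le_max_of_inter_le {f : Finset E → P} {X Y : Finset E}
    (h : f (X ∩ Y) ≤ f Y) : min (f (X ∪ Y)) (f (X ∩ Y)) ≤ max (f X) (f Y) :=
  (min_le_right _ _).trans (h.trans (le_max_right _ _))

theorem not_q3_pair_of_lt {f : Finset E → P} {X Y : Finset E} (hX : f X < f (X ∩ Y))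
    (hY : f Y < f (X ∪ Y)) : ¬ (f X < f (X ∩ Y) → f (X ∪ Y) ≤ f Y) :=
  fun h => (h hX).not_gt hY

theorem not_q3Submodular_of_lt {f : Finset E → P} {X Y : Finset E} (hX : f X < f (X ∩ Y))
    (hY : f Y < f (X ∪ Y)) : ¬ Q3Submodular f :=
  fun h => not_q3_pair_of_lt hX hY (h X Y)

end Submodularity

def chainExample (S : Finset (Fin 2)) : ℕ :=
  if 0 ∈ S then (if 1 ∈ S then 3 else 0) else (if 1 ∈ S then 2 else 1)

theorem chainExample_q4Submodular : Q4Submodular chainExample := by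
  unfold Q4Submodular
  decide

theorem chainExample_not_q3Submodular : ¬ Q3Submodular chainExample :=
  not_q3Submodular_of_lt (X := {0}) (Y := {1}) (by decide) (by decide)

theorem q4_not_q3 :
    (∃ (E : Type) (_ : Fintype E) (_ : DecidableEq E) (f : Finset E → ℝ),
      (∀ X Y : Finset E, max (f X) (f Y) ≥ min (f (X ∪ Y)) (f (X ∩ Y))) ∧
      ¬ (∀ X Y : Finset E, f X < f (X ∩ Y) → f (X ∪ Y) ≤ f Y)) ∧
    (∀ (E : Type) (_ : Fintype E) (_ : DecidableEq E) (f : Finset E → ℝ)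
      (X Y : Finset E),
      f X < f (X ∩ Y) → f (X ∩ Y) < f Y → f Y < f (X ∪ Y) →
        (max (f X) (f Y) ≥ min (f (X ∪ Y)) (f (X ∩ Y))) ∧
        ¬ (f X < f (X ∩ Y) → f (X ∪ Y) ≤ f Y)) := by
  refine ⟨⟨Fin 2, inferInstance, inferInstance, Nat.cast ∘ chainExample,
    chainExample_q4Submodular.comp Nat.mono_cast,
    fun h => chainExample_not_q3Submodular (Q3Submodular.of_comp Nat.strictMono_cast h)⟩, ?_⟩
  intro E _ _ f X Y hX hXY hY
  exact ⟨min_union_inter_le_max_of_inter_le hXY.le, not_q3_pair_of_lt hX hY⟩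
end

section
/- Let f : 2^E → P be a (Q4)-submodular function that is injective on 2^E, and let Z* be its unique global minimizer. Then for any X ⊆ E that minimizes f over [∅, X] ∪ [X, E], we have Z* ⊆ X or X ⊆ Z*. -/
theorem le_or_le_of_min_sup_inf_le_max {α P : Type*} [Lattice α] [LinearOrder P]
    {f : α → P} (hinj : Function.Injective f) {x y : α}
    (hQ4 : min (f (x ⊔ y)) (f (x ⊓ y)) ≤ max (f x) (f y)) (hy : f y ≤ f x)
    (hsup : f x ≤ f (x ⊔ y)) (hinf : f x ≤ f (x ⊓ y)) :
    y ≤ x ∨ x ≤ y := by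
  have hmin : min (f (x ⊔ y)) (f (x ⊓ y)) = f x :=
    le_antisymm (max_eq_left hy ▸ hQ4) (le_min hsup hinf)
  rcases min_choice (f (x ⊔ y)) (f (x ⊓ y)) with h | h <;> rw [h] at hmin
  · exact Or.inl (sup_eq_left.mp (hinj hmin))
  · exact Or.inr (inf_eq_left.mp (hinj hmin))

theorem q4_injective_comparable_general {E : Type*} [DecidableEq E]
    {P : Type*} [LinearOrder P] (f : Finset E → P)
    (hQ4 : ∀ X Y : Finset E, max (f X) (f Y) ≥ min (f (X ∪ Y)) (f (X ∩ Y)))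
    (hinj : Function.Injective f)
    (Zstar : Finset E) (hZ : ∀ Z : Finset E, f Zstar ≤ f Z)
    (X : Finset E) (hX : ∀ Z : Finset E, Z ⊆ X ∨ X ⊆ Z → f X ≤ f Z) :
    Zstar ⊆ X ∨ X ⊆ Zstar :=
  le_or_le_of_min_sup_inf_le_max hinj (hQ4 X Zstar) (hZ X)
    (hX _ (Or.inr Finset.subset_union_left)) (hX _ (Or.inl Finset.inter_subset_left))

theorem q4_injective_comparable {E : Type*} [Fintype E] [DecidableEq E]
    {P : Type*} [LinearOrder P] (f : Finset E → P)
    (hQ4 : ∀ X Y : Finset E, max (f X) (f Y) ≥ min (f (X ∪ Y)) (f (X ∩ Y)))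
    (hinj : Function.Injective f)
    (Zstar : Finset E) (hZ : ∀ Z : Finset E, f Zstar ≤ f Z)
    (X : Finset E) (hX : ∀ Z : Finset E, Z ⊆ X ∨ X ⊆ Z → f X ≤ f Z) :
    Zstar ⊆ X ∨ X ⊆ Zstar :=
  q4_injective_comparable_general f hQ4 hinj Zstar hZ X hX
end

section
/- Let f : 2^E → P be a (Q2)-submodular function. Then the set of global minimizers of f is closed under intersection: if X and Y are both global minimizers of f over 2^E, then X ∩ Y is a global minimizer of f. -/
theorem q2_minimizers_inter_closed_general {E : Type*} [DecidableEq E]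
    {P : Type*} [LinearOrder P] (f : Finset E → P)
    (hQ2 : ∀ X Y : Finset E, f X < f (X ∩ Y) → f (X ∪ Y) < f Y)
    (X Y : Finset E)
    (hX : ∀ Z : Finset E, f X ≤ f Z) (hY : ∀ Z : Finset E, f Y ≤ f Z) :
    ∀ Z : Finset E, f (X ∩ Y) ≤ f Z := by
  -- If `X ∩ Y` were worse than `X`, then (Q2) would make `X ∪ Y` better than the minimizer `Y`.
  have inter_le : f (X ∩ Y) ≤ f X := not_lt.1 fun h => (hQ2 X Y h).not_ge (hY _)
  exact fun Z => inter_le.trans (hX Z)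

theorem q2_minimizers_inter_closed {E : Type*} [Fintype E] [DecidableEq E]
    {P : Type*} [LinearOrder P] (f : Finset E → P)
    (hQ2 : ∀ X Y : Finset E, f X < f (X ∩ Y) → f (X ∪ Y) < f Y)
    (X Y : Finset E)
    (hX : ∀ Z : Finset E, f X ≤ f Z) (hY : ∀ Z : Finset E, f Y ≤ f Z) :
    ∀ Z : Finset E, f (X ∩ Y) ≤ f Z :=
  q2_minimizers_inter_closed_general f hQ2 X Y hX hY
end
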